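/- Let G be a unipotent algebraic group over an algebraically closed field k acting on affine irreducible varieties X and Y, and let F : X → Y be a finite G-equivariant morphism. Then every element of O(X)^G is algebraic over O(Y)^G; in particular the induced morphism F^G of quotients is quasifinite. -/
import Mathlib


open Polynomial

/-- Lemma on unipotent group actions: if `G` acts on finitely generated integral
`k`-algebras `A = O(Y)` and `B = O(X)` (with `k` algebraically closed), `f : A → B`
is an injective equivariant map making `B` integral over `A` (i.e. `F : X → Y` is
a finite `G`-equivariant morphism), and `G` is unipotent — every nonzero
`G`-stable submodule of `A^n` contains a nonzero `G`-invariant vector — then every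
`G`-invariant element of `B` is algebraic over `A^G`:  it satisfies a nonzero
polynomial relation whose coefficients are `G`-invariant elements of `A`.
In particular the induced morphism `F^G` of quotients is quasifinite. -/
theorem unipotent_invariant_algebraic
    (k A B G : Type*) [Field k] [IsAlgClosed k]
    [CommRing A] [IsDomain A] [Algebra k A] [Algebra.FiniteType k A]
    [CommRing B] [IsDomain B] [Algebra k B] [Algebra.FiniteType k B]
    [Group G] [MulSemiringAction G A] [MulSemiringAction G B]
    (f : A →ₐ[k] B) (hinj : Function.Injective f)
    (hequiv : ∀ (g : G) (a : A), f (g • a) = g • f a)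
    (hfinite : ∀ b : B, f.toRingHom.IsIntegralElem b)
    (hunip : ∀ (n : ℕ) (M : Submodule A (Fin n → A)),
      (∀ (g : G), ∀ v ∈ M, g • v ∈ M) → M ≠ ⊥ →
        ∃ v ∈ M, v ≠ 0 ∧ ∀ g : G, g • v = v)
    (x : B) (hx : ∀ g : G, g • x = x) :
    ∃ p : Polynomial A, p ≠ 0 ∧ (∀ (i : ℕ) (g : G), g • p.coeff i = p.coeff i) ∧
      Polynomial.eval₂ f.toRingHom x p = 0 := by
  obtain ⟨q, hqmonic, hqeval⟩ := hfinite x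
  set n : ℕ := q.natDegree + 1 with hn
  -- the module of relations of degree < n
  set M : Submodule A (Fin n → A) :=
    { carrier := {v | ∑ i : Fin n, f (v i) * x ^ (i : ℕ) = 0}
      add_mem' := by
        intro a b ha hb
        simp only [Set.mem_setOf_eq] at *
        have : ∑ i : Fin n, f ((a + b) i) * x ^ (i : ℕ)
            = (∑ i : Fin n, f (a i) * x ^ (i : ℕ))
              + ∑ i : Fin n, f (b i) * x ^ (i : ℕ) := by
          rw [← Finset.sum_add_distrib]
          refine Finset.sum_congr rfl fun i _ => ?_
          simp [map_add, add_mul]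
        rw [this, ha, hb, add_zero]
      zero_mem' := by simp
      smul_mem' := by
        intro c v hv
        simp only [Set.mem_setOf_eq] at *
        have : ∑ i : Fin n, f ((c • v) i) * x ^ (i : ℕ)
            = f c * ∑ i : Fin n, f (v i) * x ^ (i : ℕ) := by
          rw [Finset.mul_sum]
          refine Finset.sum_congr rfl fun i _ => ?_
          simp [smul_eq_mul, map_mul, mul_assoc]
        rw [this, hv, mul_zero] } with hM
  have hstable : ∀ (g : G), ∀ v ∈ M, g • v ∈ M := by
    intro g v hv
    simp only [hM, Submodule.mem_mk, AddSubmonoid.mem_mk, AddSubsemigroup.mem_mk,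
      Set.mem_setOf_eq] at hv ⊢
    have : ∑ i : Fin n, f ((g • v) i) * x ^ (i : ℕ)
        = g • ∑ i : Fin n, f (v i) * x ^ (i : ℕ) := by
      rw [Finset.smul_sum]
      refine Finset.sum_congr rfl fun i _ => ?_
      rw [Pi.smul_apply, hequiv, smul_mul', smul_pow', hx]
    rw [this, hv, smul_zero]
  have hne : M ≠ ⊥ := by
    intro hbot
    have hmem : (fun i : Fin n => q.coeff (i : ℕ)) ∈ M := by
      simp only [hM, Submodule.mem_mk, AddSubmonoid.mem_mk, AddSubsemigroup.mem_mk,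
        Set.mem_setOf_eq]
      rw [Polynomial.eval₂_eq_sum_range] at hqeval
      rw [← Fin.sum_univ_eq_sum_range (fun i => f.toRingHom (q.coeff i) * x ^ i) n] at hqeval
      exact hqeval
    rw [hbot, Submodule.mem_bot] at hmem
    have := congr_fun hmem ⟨q.natDegree, Nat.lt_succ_self _⟩
    simp only [Pi.zero_apply] at this
    rw [Polynomial.Monic.coeff_natDegree hqmonic] at this
    exact one_ne_zero this
  obtain ⟨v, hvM, hv0, hvinv⟩ := hunip n M hstable hne
  refine ⟨∑ i : Fin n, Polynomial.C (v i) * Polynomial.X ^ (i : ℕ), ?_, ?_, ?_⟩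
  · -- nonzero
    obtain ⟨i, hi⟩ := Function.ne_iff.mp hv0
    intro hp0
    apply hi
    have := congr_arg (fun r => Polynomial.coeff r (i : ℕ)) hp0
    simpa [Polynomial.finset_sum_coeff, Polynomial.coeff_C_mul, Polynomial.coeff_X_pow,
      Finset.sum_ite_eq', Fin.val_eq_val] using this
  · -- coefficients invariant
    intro i g
    have hcoeff : (∑ j : Fin n, Polynomial.C (v j) * Polynomial.X ^ (j : ℕ)).coeff i
        = if h : i < n then v ⟨i, h⟩ else 0 := by
      split_ifs with h
      · simp only [Polynomial.finset_sum_coeff, Polynomial.coeff_C_mul,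
          Polynomial.coeff_X_pow]
        rw [Finset.sum_eq_single (⟨i, h⟩ : Fin n)]
        · simp
        · intro b _ hb
          have : i ≠ (b : ℕ) := by
            intro he; apply hb; ext; simp [he]
          rw [if_neg this, mul_zero]
        · simp
      · simp only [Polynomial.finset_sum_coeff, Polynomial.coeff_C_mul,
          Polynomial.coeff_X_pow]
        refine Finset.sum_eq_zero fun b _ => ?_
        have : i ≠ (b : ℕ) := fun he => h (he ▸ b.isLt)
        rw [if_neg this, mul_zero]
    rw [hcoeff]
    split_ifs with h
    · have := congr_fun (hvinv g) ⟨i, h⟩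
      rwa [Pi.smul_apply] at this
    · exact smul_zero g
  · -- evaluation is zero
    simp only [hM, Submodule.mem_mk, AddSubmonoid.mem_mk, AddSubsemigroup.mem_mk,
      Set.mem_setOf_eq] at hvM
    rw [Polynomial.eval₂_finset_sum]
    rw [← hvM]
    refine Finset.sum_congr rfl fun i _ => ?_
    rw [Polynomial.eval₂_mul, Polynomial.eval₂_C, Polynomial.eval₂_X_pow]
    rfl
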